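/- arXiv:1805.01498 — 8 statements merged into one kernel-verified Lean document; each statement's English description precedes it below -/
import Mathlib

section
/- Let Σ = F_q^s and let W ⊆ Σ^n be an F_q-linear subspace with dim(W) = t ≥ 1, such that every nonzero element of W has Hamming weight at least δn (i.e., W has minimum relative distance at least δ). For i ∈ [n], let H_i = {v ∈ Σ^n : v_i = 0}. Then the average over i ∈ [n] of dim(W ∩ H_i) is at most t − δ. -/
open scoped Classical

theorem stmt_0 {F : Type*} [Field F] [Fintype F] (s n t : ℕ) (hn : 0 < n)
    (δ : ℝ)
    (W : Submodule F (Fin n → Fin s → F))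
    (ht : Module.finrank F W = t) (ht1 : 1 ≤ t)
    (hdist : ∀ w ∈ W, w ≠ 0 →
      δ * n ≤ ((Finset.univ.filter fun i : Fin n => w i ≠ 0).card : ℝ)) :
    (∑ i : Fin n, (Module.finrank F
        ↥(W ⊓ LinearMap.ker
          (LinearMap.proj i : (Fin n → Fin s → F) →ₗ[F] (Fin s → F))) : ℝ)) / n
      ≤ (t : ℝ) - δ := by
  -- get a nonzero codeword
  obtain ⟨w, hwW, hw0⟩ : ∃ w ∈ W, w ≠ 0 := by
    by_contra h
    push_neg at h
    have hW : W = ⊥ := by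
      ext x
      simp only [Submodule.mem_bot]
      exact ⟨fun hx => h x hx, fun hx => hx ▸ W.zero_mem⟩
    rw [hW, finrank_bot] at ht
    omega
  set c : ℕ := (Finset.univ.filter fun i : Fin n => w i ≠ 0).card with hc
  have hcard := hdist w hwW hw0
  -- per-coordinate bounds
  have hb : ∀ i : Fin n, (Module.finrank F
      ↥(W ⊓ LinearMap.ker
        (LinearMap.proj i : (Fin n → Fin s → F) →ₗ[F] (Fin s → F))) : ℝ)
      ≤ (t : ℝ) - (if w i ≠ 0 then (1:ℝ) else 0) := by
    intro i
    by_cases hwi : w i ≠ 0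
    · rw [if_pos hwi]
      have hlt : (W ⊓ LinearMap.ker
          (LinearMap.proj i : (Fin n → Fin s → F) →ₗ[F] (Fin s → F))) < W := by
        refine lt_of_le_of_ne inf_le_left ?_
        intro hEq
        have : w ∈ W ⊓ LinearMap.ker
            (LinearMap.proj i : (Fin n → Fin s → F) →ₗ[F] (Fin s → F)) := hEq.symm ▸ hwW
        exact hwi (this.2)
      have := Submodule.finrank_lt_finrank_of_lt hlt
      rw [ht] at this
      have : (Module.finrank F
          ↥(W ⊓ LinearMap.ker
            (LinearMap.proj i : (Fin n → Fin s → F) →ₗ[F] (Fin s → F))) : ℝ) + 1 ≤ t := by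
        exact_mod_cast this
      linarith
    · simp only [hwi, if_neg, not_false_iff, sub_zero]
      have hle := Submodule.finrank_mono (inf_le_left
        (a := W) (b := LinearMap.ker
          (LinearMap.proj i : (Fin n → Fin s → F) →ₗ[F] (Fin s → F))))
      rw [ht] at hle
      exact_mod_cast hle
  have hsum : (∑ i : Fin n, (Module.finrank F
      ↥(W ⊓ LinearMap.ker
        (LinearMap.proj i : (Fin n → Fin s → F) →ₗ[F] (Fin s → F))) : ℝ))
      ≤ (n : ℝ) * t - c := by
    calc _ ≤ ∑ i : Fin n, ((t : ℝ) - (if w i ≠ 0 then (1:ℝ) else 0)) :=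
          Finset.sum_le_sum fun i _ => hb i
      _ = (n : ℝ) * t - c := by
          rw [Finset.sum_sub_distrib, Finset.sum_const, Finset.sum_boole]
          simp [hc, mul_comm]
  have hn' : (0:ℝ) < n := by exact_mod_cast hn
  rw [div_le_iff₀ hn']
  have : ((t:ℝ) - δ) * n = (n:ℝ) * t - δ * n := by ring
  rw [this]
  linarith
end

section
/- Let q be a prime and let f_1, ..., f_t ∈ F_q[X] be polynomials such that deg(f_i) ≢ deg(f_j) (mod q) for all i ≠ j. Then the Wronskian matrix W(f_1,...,f_t), whose (i,j) entry is the i-th Hasse derivative f_j^{(i)}(X) for 0 ≤ i ≤ t−1 and 1 ≤ j ≤ t, has nonzero determinant in F_q[X]. -/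
/-!
Let `n j = deg f_j`. Every term `∏ⱼ f_j^{(σ j)}` of the Wronskian determinant has degree at most
`∑ⱼ n j - ∑ᵢ i`, with coefficient `∏ⱼ lc(f_j) · C(n j, σ j)` there, so that coefficient of the
determinant is `∏ⱼ lc(f_j) · det (C(n j, i))`. Multiplying row `i` of the binomial matrix by `i!`
gives the descending Pochhammer polynomials of degree `i` evaluated at the `n j`, whose
determinant is the Vandermonde determinant of the residues `n j mod q`; these are distinct, so it
is nonzero, and hence so is `det (C(n j, i))`.
-/

open Polynomial Finset

namespace Polynomial

variable {R : Type*}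

theorem coeff_prod_sum_of_natDegree_le [CommSemiring R] {ι : Type*} (s : Finset ι)
    (g : ι → R[X]) (d : ι → ℕ) (h : ∀ i ∈ s, (g i).natDegree ≤ d i) :
    (∏ i ∈ s, g i).coeff (∑ i ∈ s, d i) = ∏ i ∈ s, (g i).coeff (d i) := by
  induction s using Finset.cons_induction with
  | empty => simp
  | cons a s ha ih =>
    have hs : ∀ i ∈ s, (g i).natDegree ≤ d i := fun i hi => h i (mem_cons_of_mem hi)
    rw [prod_cons, sum_cons, prod_cons, ← ih hs]
    exact coeff_mul_add_eq_of_natDegree_le (h a (mem_cons_self a s))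
      ((natDegree_prod_le _ _).trans (sum_le_sum hs))

theorem natDegree_hasseDeriv_add_le_of_ne_zero [Semiring R] {p : R[X]} {k : ℕ}
    (h : hasseDeriv k p ≠ 0) : (hasseDeriv k p).natDegree + k ≤ p.natDegree := by
  have hk : k ≤ p.natDegree := not_lt.mp fun hlt => h (hasseDeriv_eq_zero_of_lt_natDegree p k hlt)
  have := natDegree_hasseDeriv_le p k
  omega

theorem coeff_hasseDeriv_natDegree_sub [Semiring R] (p : R[X]) (k : ℕ) :
    (hasseDeriv k p).coeff (p.natDegree - k) = p.leadingCoeff * (p.natDegree.choose k : R) := by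
  rw [hasseDeriv_coeff]
  rcases le_or_gt k p.natDegree with hk | hk
  · rw [Nat.sub_add_cancel hk, leadingCoeff, (Nat.cast_commute _ _).eq]
  · rw [Nat.sub_eq_zero_of_le hk.le, zero_add, coeff_eq_zero_of_natDegree_lt hk,
      Nat.choose_eq_zero_of_lt hk, Nat.cast_zero, mul_zero, mul_zero]

end Polynomial

namespace Matrix

variable {n : Type*} [Fintype n] [DecidableEq n] {R : Type*} [CommRing R]

/-- When `e i > d j` the hypothesis forces `M i j = 0`, so the truncated `d j - e i` is harmless. -/
theorem coeff_det_eq_det_coeff (M : Matrix n n R[X]) (d e : n → ℕ)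
    (h : ∀ i j, M i j ≠ 0 → (M i j).natDegree + e i ≤ d j) :
    M.det.coeff (∑ j, d j - ∑ i, e i) = (of fun i j => (M i j).coeff (d j - e i)).det := by
  rw [det_apply, det_apply, finsetSum_coeff]
  refine sum_congr rfl fun σ _ => ?_
  rw [coeff_smul]
  congr 1
  by_cases hσ : ∀ j, e (σ j) ≤ d j
  · have hdeg : ∑ j, d j - ∑ i, e i = ∑ j, (d j - e (σ j)) := by
      rw [sum_tsub_distrib _ fun j _ => hσ j, Equiv.sum_comp σ e]
    refine hdeg ▸ coeff_prod_sum_of_natDegree_le _ _ _ fun j _ => ?_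
    by_cases hM : M (σ j) j = 0
    · simp [hM]
    · have := h _ _ hM
      omega
  · obtain ⟨j, hj⟩ := not_forall.mp hσ
    have hM : M (σ j) j = 0 := by
      by_contra hM
      have := h _ _ hM
      omega
    have hprod : ∏ i, M (σ i) i = 0 := prod_eq_zero (mem_univ j) hM
    have hprod' : ∏ i, of (fun i j => (M i j).coeff (d j - e i)) (σ i) i = 0 :=
      prod_eq_zero (mem_univ j) (by simp [hM])
    rw [hprod, hprod', coeff_zero]

theorem det_choose_ne_zero [IsDomain R] {t : ℕ} (m : Fin t → ℕ)
    (hm : Function.Injective fun j => (m j : R)) :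
    (of fun i j : Fin t => ((m j).choose i : R)).det ≠ 0 := by
  have hpoch : (of fun j i : Fin t => (descPochhammer R i).eval (m j : R)).det
      = (∏ i : Fin t, ((i : ℕ).factorial : R)) *
          (of fun i j : Fin t => ((m j).choose i : R)).det := by
    rw [← det_transpose (of fun i j : Fin t => ((m j).choose i : R)), ← det_mul_row]
    congr with j i
    simp [descPochhammer_eval_eq_descFactorial, Nat.descFactorial_eq_factorial_mul_choose]
  have hvdm := det_eval_matrixOfPolynomials_eq_det_vandermonde (fun j => (m j : R))
    (fun i => descPochhammer R i) (fun i => descPochhammer_natDegree R i)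
    (fun i => monic_descPochhammer R i)
  have hne := det_vandermonde_ne_zero_iff.mpr hm
  rw [hvdm, hpoch] at hne
  exact right_ne_zero_of_mul hne

end Matrix

theorem Polynomial.coeff_det_hasseDeriv {R : Type*} [CommRing R] {t : ℕ} (f : Fin t → R[X]) :
    (Matrix.of fun i j : Fin t => hasseDeriv (i : ℕ) (f j)).det.coeff
        (∑ j, (f j).natDegree - ∑ i : Fin t, (i : ℕ))
      = (∏ j, (f j).leadingCoeff) *
          (Matrix.of fun i j : Fin t => ((f j).natDegree.choose i : R)).det := by
  rw [Matrix.coeff_det_eq_det_coeff (Matrix.of fun i j : Fin t => hasseDeriv (i : ℕ) (f j))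
    (fun j => (f j).natDegree) (fun i => i) fun i j h => natDegree_hasseDeriv_add_le_of_ne_zero h,
    ← Matrix.det_mul_row]
  simp only [Matrix.of_apply, coeff_hasseDeriv_natDegree_sub]

theorem stmt_1 (q t : ℕ) [Fact q.Prime] (f : Fin t → Polynomial (ZMod q))
    (hf : ∀ j, f j ≠ 0)
    (hdeg : ∀ i j, i ≠ j → (f i).natDegree % q ≠ (f j).natDegree % q) :
    Matrix.det (Matrix.of fun i j : Fin t => Polynomial.hasseDeriv (i : ℕ) (f j)) ≠ 0 := by
  have hinj : Function.Injective fun j => ((f j).natDegree : ZMod q) := fun i j hij => by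
    by_contra hne
    exact hdeg i j hne ((ZMod.natCast_eq_natCast_iff' _ _ _).mp hij)
  have htop : (Matrix.of fun i j : Fin t => hasseDeriv (i : ℕ) (f j)).det.coeff
      (∑ j, (f j).natDegree - ∑ i : Fin t, (i : ℕ)) ≠ 0 := by
    rw [coeff_det_hasseDeriv]
    exact mul_ne_zero (prod_ne_zero_iff.mpr fun j _ => leadingCoeff_ne_zero.mpr (hf j))
      (Matrix.det_choose_ne_zero _ hinj)
  exact fun hzero => htop (by rw [hzero, coeff_zero])
end

section
/- Let q be a prime, d and t positive integers. Then the determinant of the t×t matrix M with entries M_{i,j} = binom(d_j, i) for 0 ≤ i ≤ t−1 and 1 ≤ j ≤ t, where d_1,...,d_t are nonnegative integers pairwise incongruent modulo q, is nonzero in F_q. -/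
theorem stmt_2 (q t : ℕ) [Fact q.Prime] (ht : 0 < t)
    (d : Fin t → ℕ)
    (hd : ∀ i j, i ≠ j → d i % q ≠ d j % q) :
    Matrix.det (Matrix.of fun i j : Fin t => ((d j).choose (i : ℕ) : ZMod q)) ≠ 0 := by
  have hq : q.Prime := Fact.out
  have hq0 : 0 < q := hq.pos
  -- t ≤ q
  have htq : t ≤ q := by
    have : Function.Injective (fun j : Fin t => (⟨d j % q, Nat.mod_lt _ hq0⟩ : Fin q)) := by
      intro i j h
      by_contra hij
      exact hd i j hij (by simpa using congrArg Fin.val h)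
    simpa using Fintype.card_le_of_injective _ this
  -- the scaled matrix equals evaluations of descPochhammer
  have key : Matrix.det (Matrix.of fun i j : Fin t =>
      ((Nat.factorial (i : ℕ) : ZMod q) * ((d j).choose (i : ℕ) : ZMod q))) =
      Matrix.det (Matrix.vandermonde fun j : Fin t => ((d j : ZMod q))) := by
    have h1 : (Matrix.of fun i j : Fin t =>
        ((Nat.factorial (i : ℕ) : ZMod q) * ((d j).choose (i : ℕ) : ZMod q))) =
        Matrix.transpose (Matrix.of fun i j : Fin t =>
          ((descPochhammer (ZMod q) (j : ℕ)).eval ((d i : ZMod q)))) := by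
      ext i j
      simp only [Matrix.of_apply, Matrix.transpose_apply]
      rw [descPochhammer_eval_eq_descFactorial,
        Nat.descFactorial_eq_factorial_mul_choose, Nat.cast_mul]
    rw [h1, Matrix.det_transpose,
      ← Matrix.det_eval_matrixOfPolynomials_eq_det_vandermonde
        (fun j : Fin t => ((d j : ZMod q))) (fun i => descPochhammer (ZMod q) (i : ℕ))
        (fun i => descPochhammer_natDegree _ _)
        (fun i => monic_descPochhammer _ _)]
  have hscale := Matrix.det_mul_column (fun i : Fin t => (Nat.factorial (i : ℕ) : ZMod q))
      (Matrix.of fun i j : Fin t => ((d j).choose (i : ℕ) : ZMod q))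
  rw [show (Matrix.of fun i j : Fin t =>
      (Nat.factorial (i : ℕ) : ZMod q) * (Matrix.of fun i j : Fin t =>
        ((d j).choose (i : ℕ) : ZMod q)) i j) = Matrix.of fun i j : Fin t =>
      ((Nat.factorial (i : ℕ) : ZMod q) * ((d j).choose (i : ℕ) : ZMod q)) from rfl, key] at hscale
  -- vandermonde det nonzero
  have hv : Matrix.det (Matrix.vandermonde fun j : Fin t => ((d j : ZMod q))) ≠ 0 := by
    rw [Matrix.det_vandermonde_ne_zero_iff]
    intro i j h
    by_contra hij
    exact hd i j hij ((ZMod.natCast_eq_natCast_iff' _ _ _).mp h)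
  -- factorials nonzero
  have hfac : (∏ i : Fin t, (Nat.factorial (i : ℕ) : ZMod q)) ≠ 0 := by
    apply Finset.prod_ne_zero_iff.mpr
    intro i _
    rw [Ne, ZMod.natCast_eq_zero_iff]
    intro hdvd
    exact absurd ((Nat.Prime.dvd_factorial hq).mp hdvd)
      (Nat.not_le.mpr (lt_of_lt_of_le i.isLt htq))
  intro h0
  rw [h0, mul_zero] at hscale
  exact hv hscale
end

section
/- Let q be prime, r < q, and let A(X), B_0(X), ..., B_{r−1}(X) ∈ F_q[X]. Then the set V = { f ∈ F_q[X] : deg(f) ≤ d and Σ_{i=0}^{r−1} B_i(X) f^{(i)}(X) = 0 } is closed under multiplication by X^q, in the sense that if f ∈ V and deg(f) ≤ d − q then X^q · f(X) ∈ V. -/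
/-! Over a ring of prime characteristic `p`, the binomial coefficients `p.choose i` with
`0 < i < p` vanish, so the Leibniz rule for Hasse derivatives of order `k < p` sees `X ^ p`
as a constant: `D^(k) (X ^ p * f) = X ^ p * D^(k) f`. Multiplying the differential equation
by `X ^ p` therefore preserves it. -/

open Polynomial

section CharP

variable {R : Type*} [Semiring R] (p : ℕ) [hp : Fact p.Prime] [CharP R p]

theorem hasseDeriv_X_pow_char_eq_zero {k : ℕ} (hk0 : k ≠ 0) (hkp : k < p) :
    hasseDeriv k (X ^ p : R[X]) = 0 := by
  rw [← monomial_one_right_eq_X_pow, hasseDeriv_monomial,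
    (CharP.cast_eq_zero_iff R p _).mpr (hp.out.dvd_choose_self hk0 hkp), zero_mul,
    monomial_zero_right]

theorem hasseDeriv_X_pow_char_mul {k : ℕ} (hkp : k < p) (f : R[X]) :
    hasseDeriv k (X ^ p * f) = X ^ p * hasseDeriv k f := by
  rw [hasseDeriv_mul, Finset.sum_eq_single_of_mem (0, k) (by simp)]
  · rw [hasseDeriv_zero']
  rintro ⟨i, j⟩ hij hne
  rw [Finset.HasAntidiagonal.mem_antidiagonal] at hij
  have hi : i ≠ 0 := by
    rintro rfl
    exact hne (by simp_all)
  rw [hasseDeriv_X_pow_char_eq_zero p hi (by omega), zero_mul]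

end CharP

theorem stmt_4_general (q r d : ℕ) [Fact q.Prime] (hr : r < q)
    (B : Fin r → Polynomial (ZMod q)) (f : Polynomial (ZMod q))
    (hf : ∑ i : Fin r, B i * Polynomial.hasseDeriv (i : ℕ) f = 0)
    (hfd' : f.natDegree + q ≤ d) :
    (Polynomial.X ^ q * f).natDegree ≤ d ∧
      ∑ i : Fin r, B i * Polynomial.hasseDeriv (i : ℕ) (Polynomial.X ^ q * f) = 0 := by
  refine ⟨?_, ?_⟩
  · calc (X ^ q * f).natDegree ≤ (X ^ q : (ZMod q)[X]).natDegree + f.natDegree := natDegree_mul_le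
      _ ≤ d := by rw [natDegree_X_pow]; omega
  · calc ∑ i : Fin r, B i * hasseDeriv i (X ^ q * f)
        = X ^ q * ∑ i : Fin r, B i * hasseDeriv i f := by
          rw [Finset.mul_sum]
          refine Finset.sum_congr rfl fun i _ => ?_
          rw [hasseDeriv_X_pow_char_mul q (i.is_lt.trans hr), mul_left_comm]
      _ = 0 := by rw [hf, mul_zero]

theorem stmt_4 (q r d : ℕ) [Fact q.Prime] (hr : r < q)
    (B : Fin r → Polynomial (ZMod q)) (f : Polynomial (ZMod q))
    (hfd : f.natDegree ≤ d)
    (hf : ∑ i : Fin r, B i * Polynomial.hasseDeriv (i : ℕ) f = 0)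
    (hfd' : f.natDegree + q ≤ d) :
    (Polynomial.X ^ q * f).natDegree ≤ d ∧
      ∑ i : Fin r, B i * Polynomial.hasseDeriv (i : ℕ) (Polynomial.X ^ q * f) = 0 :=
  stmt_4_general q r d hr B f hf hfd'
end

section
/- Let W ⊆ F_q[X] be an (X^q,d)-closed linear subspace, i.e., W consists of polynomials of degree at most d and for every f ∈ W with deg(f) ≤ d−q one has X^q·f ∈ W. Then there exist f_1,...,f_{t'} ∈ W with pairwise distinct degrees modulo q such that every f ∈ W can be uniquely written as f(X) = Σ_{i=1}^{t'} C_i(X^q) f_i(X), where each C_i(Y) ∈ F_q[Y] satisfies q·deg(C_i) + deg(f_i) ≤ d. Moreover t' equals the number of distinct residues {deg(f) mod q : f ∈ W \ {0}}. -/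
open Polynomial

theorem stmt_5 (q d : ℕ) [Fact q.Prime]
    (W : Submodule (ZMod q) (Polynomial (ZMod q)))
    (hdeg : ∀ f ∈ W, f.natDegree ≤ d)
    (hclosed : ∀ f ∈ W, f.natDegree + q ≤ d → Polynomial.X ^ q * f ∈ W) :
    ∃ (t' : ℕ) (f : Fin t' → Polynomial (ZMod q)),
      (∀ i, f i ∈ W) ∧ (∀ i, f i ≠ 0) ∧
      (∀ i j, i ≠ j → (f i).natDegree % q ≠ (f j).natDegree % q) ∧
      (∀ g ∈ W, ∃! C : Fin t' → Polynomial (ZMod q),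
        (∀ i, q * (C i).natDegree + (f i).natDegree ≤ d) ∧
        g = ∑ i, (C i).comp (Polynomial.X ^ q) * f i) ∧
      t' = Set.ncard {r : ℕ | ∃ g ∈ W, g ≠ 0 ∧ g.natDegree % q = r} := by
  classical
  have hqp : q.Prime := Fact.out
  have hq1 : 1 < q := hqp.one_lt
  set Rset : Set ℕ := {r : ℕ | ∃ g ∈ W, g ≠ 0 ∧ g.natDegree % q = r} with hRdef
  have hRfin : Rset.Finite := by
    apply (Set.finite_Iio q).subset
    rintro x ⟨g, hg, hg0, rfl⟩
    exact Nat.mod_lt _ (by omega)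
  set t' : ℕ := hRfin.toFinset.card with ht'
  set e : Fin t' ≃ {x // x ∈ hRfin.toFinset} := hRfin.toFinset.equivFin.symm with he
  set r : Fin t' → ℕ := fun i => (e i : ℕ) with hrdef
  have hrmem : ∀ i, r i ∈ Rset := fun i => hRfin.mem_toFinset.mp (e i).2
  have hrinj : Function.Injective r := by
    intro i j hij
    exact e.injective (Subtype.ext hij)
  -- choose minimal degree polynomials
  have hchoice : ∀ i : Fin t', ∃ g, g ∈ W ∧ g ≠ 0 ∧ g.natDegree % q = r i ∧
      ∀ h, h ∈ W → h ≠ 0 → h.natDegree % q = r i → g.natDegree ≤ h.natDegree := by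
    intro i
    obtain ⟨g, hgW, hg0, hgr⟩ := hrmem i
    have hP : ∃ n : ℕ, ∃ g, g ∈ W ∧ g ≠ 0 ∧ g.natDegree = n ∧ n % q = r i :=
      ⟨g.natDegree, g, hgW, hg0, rfl, hgr⟩
    obtain ⟨g', hg'W, hg'0, hg'deg, hg'r⟩ := Nat.find_spec hP
    refine ⟨g', hg'W, hg'0, by rw [hg'deg]; exact hg'r, ?_⟩
    intro h hhW hh0 hhr
    rw [hg'deg]
    exact Nat.find_le ⟨h, hhW, hh0, rfl, hhr⟩
  choose f hfW hf0 hfr hfmin using hchoice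
  -- surjectivity of residues
  have hsurj : ∀ g, g ∈ W → g ≠ 0 → ∃ i, r i = g.natDegree % q := by
    intro g hgW hg0
    have hmem : g.natDegree % q ∈ Rset := ⟨g, hgW, hg0, rfl⟩
    exact ⟨e.symm ⟨_, hRfin.mem_toFinset.mpr hmem⟩, by simp [hrdef, he]⟩
  -- existence of representation
  have key : ∀ n : ℕ, ∀ g, g ∈ W → g.natDegree ≤ n →
      ∃ C : Fin t' → Polynomial (ZMod q),
        (∀ i, q * (C i).natDegree + (f i).natDegree ≤ d) ∧
        g = ∑ i, (C i).comp (X ^ q) * f i := by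
    intro n
    induction n using Nat.strong_induction_on with
    | _ n ih =>
      intro g hgW hgn
      by_cases hg0 : g = 0
      · exact ⟨0, fun i => by simpa using hdeg (f i) (hfW i), by simp [hg0]⟩
      obtain ⟨j, hj⟩ := hsurj g hgW hg0
      have hle : (f j).natDegree ≤ g.natDegree := hfmin j g hgW hg0 hj.symm
      have hmod : (f j).natDegree % q = g.natDegree % q := by rw [hfr j, hj]
      obtain ⟨k, hk⟩ := (Nat.modEq_iff_dvd' hle).mp hmod
      have hdegg : g.natDegree = (f j).natDegree + q * k := by omega
      have hgd : g.natDegree ≤ d := hdeg g hgW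
      have hXpow : ∀ m : ℕ, ((X : Polynomial (ZMod q)) ^ m) ≠ 0 :=
        fun m => pow_ne_zero m Polynomial.X_ne_zero
      have hWk : ∀ m, m ≤ k → (X : Polynomial (ZMod q)) ^ (q * m) * f j ∈ W := by
        intro m hm
        induction m with
        | zero => simpa using hfW j
        | succ m ih2 =>
          have hmem := ih2 (by omega)
          have hdm : ((X : Polynomial (ZMod q)) ^ (q * m) * f j).natDegree
              = q * m + (f j).natDegree := by
            rw [Polynomial.natDegree_mul (hXpow _) (hf0 j), Polynomial.natDegree_X_pow]
          have hmul : q * m + q ≤ q * k := by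
            rw [← Nat.mul_succ]; exact Nat.mul_le_mul_left q hm
          have hstep := hclosed _ hmem (by rw [hdm]; omega)
          have heq : (X : Polynomial (ZMod q)) ^ (q * (m + 1)) * f j
              = X ^ q * (X ^ (q * m) * f j) := by
            rw [← mul_assoc, ← pow_add]; ring_nf
          rw [heq]; exact hstep
      set c : ZMod q := g.leadingCoeff * (f j).leadingCoeff⁻¹ with hc
      have hlf : (f j).leadingCoeff ≠ 0 := Polynomial.leadingCoeff_ne_zero.mpr (hf0 j)
      have hlg : g.leadingCoeff ≠ 0 := Polynomial.leadingCoeff_ne_zero.mpr hg0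
      have hc0 : c ≠ 0 := mul_ne_zero hlg (inv_ne_zero hlf)
      have hCc0 : (Polynomial.C c : Polynomial (ZMod q)) ≠ 0 := by
        simpa using hc0
      set h : Polynomial (ZMod q) := Polynomial.C c * (X ^ (q * k) * f j) with hh
      have hhW : h ∈ W := by
        rw [hh, ← Polynomial.smul_eq_C_mul]
        exact W.smul_mem c (hWk k le_rfl)
      have hh0 : h ≠ 0 :=
        mul_ne_zero hCc0 (mul_ne_zero (hXpow _) (hf0 j))
      have hhd : h.natDegree = g.natDegree := by
        rw [hh, Polynomial.natDegree_mul hCc0 (mul_ne_zero (hXpow _) (hf0 j)),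
          Polynomial.natDegree_C, Polynomial.natDegree_mul (hXpow _) (hf0 j),
          Polynomial.natDegree_X_pow]
        omega
      have hhl : h.leadingCoeff = g.leadingCoeff := by
        rw [hh, Polynomial.leadingCoeff_mul, Polynomial.leadingCoeff_mul,
          Polynomial.leadingCoeff_C, Polynomial.leadingCoeff_X_pow, hc]
        field_simp
      set g' := g - h with hg'
      have hg'W : g' ∈ W := W.sub_mem hgW hhW
      have hrep' : ∃ C' : Fin t' → Polynomial (ZMod q),
          (∀ i, q * (C' i).natDegree + (f i).natDegree ≤ d) ∧
          g' = ∑ i, (C' i).comp (X ^ q) * f i := by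
        by_cases hg'0 : g' = 0
        · exact ⟨0, fun i => by simpa using hdeg (f i) (hfW i), by simp [hg'0]⟩
        · have hdlt : g'.degree < g.degree := by
            apply Polynomial.degree_sub_lt _ hg0 hhl.symm
            rw [Polynomial.degree_eq_natDegree hg0, Polynomial.degree_eq_natDegree hh0, hhd]
          have hlt : g'.natDegree < g.natDegree :=
            Polynomial.natDegree_lt_natDegree hg'0 hdlt
          exact ih g'.natDegree (by omega) g' hg'W le_rfl
      obtain ⟨C', hC'b, hC'eq⟩ := hrep'
      set P : Polynomial (ZMod q) := Polynomial.C c * X ^ k with hP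
      have hPd : P.natDegree = k := Polynomial.natDegree_C_mul_X_pow k c hc0
      refine ⟨fun i => C' i + if i = j then P else 0, ?_, ?_⟩
      · intro i
        by_cases hij : i = j
        · subst hij
          simp only [eq_self_iff_true, if_true]
          have hadd : ((C' i) + P).natDegree ≤ max (C' i).natDegree k := by
            have h0 := Polynomial.natDegree_add_le (C' i) P
            rwa [hPd] at h0
          have hbi := hC'b i
          rcases le_total (C' i).natDegree k with hmk | hmk
          · have h1 : ((C' i) + P).natDegree ≤ k := by omega
            have := Nat.mul_le_mul_left q h1
            omega
          · have h1 : ((C' i) + P).natDegree ≤ (C' i).natDegree := by omega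
            have := Nat.mul_le_mul_left q h1
            omega
        · simp only [if_neg hij, add_zero]
          exact hC'b i
      · have hsplit : ∀ i : Fin t',
            ((C' i + if i = j then P else 0)).comp (X ^ q) * f i
            = (C' i).comp (X ^ q) * f i
              + ((if i = j then P else 0)).comp (X ^ q) * f i := by
          intro i
          rw [Polynomial.add_comp, add_mul]
        rw [Finset.sum_congr rfl (fun i _ => hsplit i), Finset.sum_add_distrib, ← hC'eq]
        have hsingle : (∑ i, ((if i = j then P else 0) : Polynomial (ZMod q)).comp (X ^ q) * f i)
            = h := by
          rw [Finset.sum_eq_single j]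
          · rw [if_pos rfl, hP, hh]
            simp [Polynomial.mul_comp, Polynomial.pow_comp, ← pow_mul, mul_assoc, mul_comm k q]
          · intro i _ hij
            simp [if_neg hij]
          · intro habs
            exact absurd (Finset.mem_univ j) habs
        rw [hsingle, hg']
        ring
  have hTne : ∀ (C : Polynomial (ZMod q)), C ≠ 0 → ∀ i : Fin t',
      C.comp (X ^ q) * f i ≠ 0 ∧
      (C.comp (X ^ q) * f i).natDegree = C.natDegree * q + (f i).natDegree := by
    intro C hC i
    have hcomp : C.comp (X ^ q) ≠ 0 := by
      have hlc : (C.comp (X ^ q)).leadingCoeff = C.leadingCoeff * (X ^ q : Polynomial (ZMod q)).leadingCoeff ^ C.natDegree :=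
        Polynomial.leadingCoeff_comp (by simp; omega)
      rw [← Polynomial.leadingCoeff_ne_zero, hlc]
      simp [Polynomial.leadingCoeff_ne_zero, hC]
    refine ⟨mul_ne_zero hcomp (hf0 i), ?_⟩
    rw [Polynomial.natDegree_mul hcomp (hf0 i), Polynomial.natDegree_comp]
    simp
  have huniq : ∀ C : Fin t' → Polynomial (ZMod q),
      (∑ i, (C i).comp (X ^ q) * f i) = 0 → C = 0 := by
    intro C hC
    by_contra hC0
    obtain ⟨i1, hi1⟩ : ∃ i, C i ≠ 0 := Function.ne_iff.mp hC0
    have hSne : (Finset.univ.filter (fun i => C i ≠ 0)).Nonempty :=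
      ⟨i1, by simp [hi1]⟩
    obtain ⟨i0, hi0S, hi0max⟩ := Finset.exists_max_image _
      (fun i => ((C i).comp (X ^ q) * f i).natDegree) hSne
    have hi0 : C i0 ≠ 0 := (Finset.mem_filter.mp hi0S).2
    set N := ((C i0).comp (X ^ q) * f i0).natDegree with hN
    have hcoeff : (∑ i, (C i).comp (X ^ q) * f i).coeff N = ((C i0).comp (X ^ q) * f i0).coeff N := by
      rw [Polynomial.finset_sum_coeff]
      refine Finset.sum_eq_single i0 ?_ (by simp)
      intro i _ hne
      by_cases hCi : C i = 0
      · simp [hCi]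
      · obtain ⟨hT, hTd⟩ := hTne _ hCi i
        apply Polynomial.coeff_eq_zero_of_natDegree_lt
        have hle : ((C i).comp (X ^ q) * f i).natDegree ≤ N :=
          hi0max i (by simp [hCi])
        rcases lt_or_eq_of_le hle with h | h
        · exact h
        · exfalso
          obtain ⟨hT0, hTd0⟩ := hTne _ hi0 i0
          have hmod : (f i).natDegree % q = (f i0).natDegree % q := by
            have h1 : ((C i).comp (X ^ q) * f i).natDegree % q = (f i).natDegree % q := by
              rw [hTd, Nat.mul_comm, Nat.add_comm, Nat.add_mul_mod_self_left]
            have h2 : N % q = (f i0).natDegree % q := by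
              rw [hN, hTd0, Nat.mul_comm, Nat.add_comm, Nat.add_mul_mod_self_left]
            rw [← h1, h, h2]
          rw [hfr i, hfr i0] at hmod
          exact hne (hrinj hmod)
    rw [hC] at hcoeff
    have hlc : ((C i0).comp (X ^ q) * f i0).coeff N ≠ 0 := by
      rw [hN, ← Polynomial.leadingCoeff]
      exact Polynomial.leadingCoeff_ne_zero.mpr (hTne _ hi0 i0).1
    simp at hcoeff
    exact hlc hcoeff.symm
  refine ⟨t', f, hfW, hf0, ?_, ?_, ?_⟩
  · intro i j hij h
    rw [hfr i, hfr j] at h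
    exact hij (hrinj h)
  · intro g hgW
    obtain ⟨C, hCb, hCeq⟩ := key g.natDegree g hgW le_rfl
    refine ⟨C, ⟨hCb, hCeq⟩, ?_⟩
    intro C2 ⟨hC2b, hC2eq⟩
    have h0 : (∑ i, ((C2 - C) i).comp (X ^ q) * f i) = 0 := by
      have hsd : ∑ i, ((C2 - C) i).comp (X ^ q) * f i
          = (∑ i, (C2 i).comp (X ^ q) * f i) - ∑ i, (C i).comp (X ^ q) * f i := by
        rw [← Finset.sum_sub_distrib]
        congr 1; ext i
        simp [Pi.sub_apply, Polynomial.sub_comp, sub_mul]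
      rw [hsd, ← hC2eq, ← hCeq, sub_self]
    have hz := huniq _ h0
    funext i
    have hz2 : C2 i - C i = 0 := by
      have : (C2 - C) i = 0 := by rw [hz]; rfl
      exact this
    linear_combination (norm := abel) hz2
  · exact (Set.ncard_eq_toFinset_card Rset hRfin).symm
end

section
/- Let q be prime and let r < q. Suppose B_0(X),...,B_{r−1}(X) ∈ F_q[X] are not all zero and let V = { f ∈ F_q[X] : deg(f) ≤ d and Σ_{i=0}^{r−1} B_i(X) f^{(i)}(X) = 0 }. Then the number of distinct residues modulo q among degrees of nonzero elements of V is at most r−1. -/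
open Polynomial Finset Matrix



lemma descFactorial_cast (q : ℕ) (a j : ℕ) :
    ((Nat.descFactorial a j : ℕ) : ZMod q) = ∏ k ∈ range j, ((a : ZMod q) - k) := by
  rcases le_or_gt j a with h | h
  · rw [Nat.descFactorial_eq_prod_range, Nat.cast_prod]
    exact Finset.prod_congr rfl fun k hk =>
      Nat.cast_sub (le_trans (Nat.le_of_lt (Finset.mem_range.mp hk)) h)
  · rw [Nat.descFactorial_eq_zero_iff_lt.mpr h, Nat.cast_zero]
    exact (Finset.prod_eq_zero (Finset.mem_range.mpr h) (by simp)).symm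

lemma factorial_ne_zero' (q j : ℕ) [Fact q.Prime] (hj : j < q) :
    ((Nat.factorial j : ℕ) : ZMod q) ≠ 0 := by
  rw [Ne, ZMod.natCast_eq_zero_iff]
  intro h
  exact absurd ((Nat.Prime.dvd_factorial (Fact.out)).mp h) (not_le.mpr hj)

lemma choose_cast_lucas (q : ℕ) [Fact q.Prime] (a m j : ℕ) (hj : j < q) :
    ((Nat.choose (a + q * m) j : ℕ) : ZMod q) = (Nat.choose a j : ZMod q) := by
  apply mul_left_cancel₀ (factorial_ne_zero' q j hj)
  rw [← Nat.cast_mul, ← Nat.cast_mul, ← Nat.descFactorial_eq_factorial_mul_choose,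
    ← Nat.descFactorial_eq_factorial_mul_choose, descFactorial_cast, descFactorial_cast]
  simp

lemma hasseDeriv_mul_X_pow (q : ℕ) [Fact q.Prime] (m j : ℕ) (hj : j < q)
    (f : Polynomial (ZMod q)) :
    hasseDeriv j (f * X ^ (q * m)) = hasseDeriv j f * X ^ (q * m) := by
  ext n
  rw [hasseDeriv_coeff, coeff_mul_X_pow', coeff_mul_X_pow', hasseDeriv_coeff]
  rcases le_or_gt (q * m) n with h | h
  · rw [if_pos h, if_pos (le_trans h (Nat.le_add_right _ _))]
    have : n + j - q * m = n - q * m + j := by omega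
    rw [this]
    have : n + j = (n - q * m + j) + q * m := by omega
    rw [this, choose_cast_lucas _ _ _ _ hj]

  · rw [if_neg (not_le.mpr h)]
    rcases le_or_gt (q * m) (n + j) with h2 | h2
    · rw [if_pos h2]
      have : n + j = (n + j - q * m) + q * m := by omega
      rw [this, choose_cast_lucas _ _ _ _ hj]
      have : Nat.choose (n + j - q * m) j = 0 := Nat.choose_eq_zero_of_lt (by omega)
      rw [this]
      simp
    · rw [if_neg (not_le.mpr h2)]
      simp

lemma coeff_prod_of_natDegree_le' {R : Type*} [CommSemiring R] {ι : Type*} (s : Finset ι)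
    (p : ι → R[X]) (n : ι → ℕ) (h : ∀ i ∈ s, (p i).natDegree ≤ n i) :
    (∏ i ∈ s, p i).coeff (∑ i ∈ s, n i) = ∏ i ∈ s, (p i).coeff (n i) := by
  induction s using Finset.cons_induction with
  | empty => simp
  | cons a s ha ih =>
    rw [Finset.prod_cons, Finset.sum_cons, Finset.prod_cons,
      Polynomial.coeff_mul_add_eq_of_natDegree_le (h a (Finset.mem_cons_self a s))
        (le_trans (Polynomial.natDegree_prod_le s p) (Finset.sum_le_sum
          (fun i hi => h i (Finset.mem_cons_of_mem hi)))),
      ih (fun i hi => h i (Finset.mem_cons_of_mem hi))]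

lemma det_choose_ne_zero (q r : ℕ) [Fact q.Prime] (hr : r < q) (D : Fin r → ℕ)
    (hD : Function.Injective fun a => ((D a : ZMod q))) :
    (Matrix.of fun a b : Fin r => ((Nat.choose (D a) (b : ℕ) : ℕ) : ZMod q)).det ≠ 0 := by
  have key : (Matrix.of fun a b : Fin r => ((Nat.choose (D a) (b : ℕ) : ℕ) : ZMod q)) =
      (Matrix.of fun a b : Fin r =>
        ((∏ k ∈ range (b : ℕ), (X - C (k : ZMod q))).eval ((D a : ZMod q)))) *
      Matrix.diagonal (fun b : Fin r => (((b : ℕ).factorial : ZMod q))⁻¹) := by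
    ext a b
    rw [Matrix.mul_diagonal, Matrix.of_apply, Matrix.of_apply]
    rw [eq_comm, mul_comm, inv_mul_eq_iff_eq_mul₀ (factorial_ne_zero' q _ (lt_trans b.isLt hr))]
    rw [eval_prod]
    simp only [eval_sub, eval_X, eval_C]
    rw [← descFactorial_cast, ← Nat.cast_mul, Nat.descFactorial_eq_factorial_mul_choose,
      Nat.cast_mul, mul_comm]
  rw [key, Matrix.det_mul, Matrix.det_diagonal]
  apply mul_ne_zero
  · rw [← Matrix.det_eval_matrixOfPolynomials_eq_det_vandermonde]
    · exact Matrix.det_vandermonde_ne_zero_iff.mpr hD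
    · intro i
      rw [natDegree_prod _ _ (fun k _ => X_sub_C_ne_zero _)]
      simp only [natDegree_X_sub_C]
      simp
    · exact fun i => monic_prod_of_monic _ _ (fun k _ => monic_X_sub_C _)
  · exact Finset.prod_ne_zero_iff.mpr fun b _ =>
      inv_ne_zero (factorial_ne_zero' q _ (lt_trans b.isLt hr))
lemma wronskian_ne_zero (q r : ℕ) [Fact q.Prime] (hr : r < q)
    (f : Fin r → Polynomial (ZMod q)) (hf : ∀ i, f i ≠ 0)
    (hdist : Function.Injective fun i => (f i).natDegree % q) :
    (Matrix.of fun i j : Fin r => hasseDeriv (j : ℕ) (f i)).det ≠ 0 := by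
  rcases Nat.eq_zero_or_pos r with rfl | hr0
  · simp [Matrix.det_isEmpty]
  have hq0 : 0 < q := lt_trans hr0 hr
  set g : Fin r → Polynomial (ZMod q) := fun i => f i * X ^ (q * r) with hg
  set D : Fin r → ℕ := fun i => (f i).natDegree + q * r with hDdef
  have hgne : ∀ i, g i ≠ 0 := fun i => mul_ne_zero (hf i) (pow_ne_zero _ X_ne_zero)
  have hgdeg : ∀ i, (g i).natDegree = D i := fun i => by
    rw [hg, hDdef, natDegree_mul (hf i) (pow_ne_zero _ X_ne_zero), natDegree_X_pow]
  have hDge : ∀ a, r ≤ D a := fun a => le_trans (Nat.le_mul_of_pos_left r hq0)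
    (Nat.le_add_left _ _)
  intro hdet
  have hW' : (Matrix.of fun i j : Fin r => hasseDeriv (j : ℕ) (g i)) =
      (X ^ (q * r) : Polynomial (ZMod q)) • (Matrix.of fun i j : Fin r =>
        hasseDeriv (j : ℕ) (f i)) := by
    ext i j
    simp only [Matrix.smul_apply, Matrix.of_apply, smul_eq_mul, hg]
    rw [hasseDeriv_mul_X_pow q r (j : ℕ) (lt_trans j.isLt hr), mul_comm]
  have hdet' : (Matrix.of fun i j : Fin r => hasseDeriv (j : ℕ) (g i)).det = 0 := by
    rw [hW', Matrix.det_smul, hdet, mul_zero]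
  -- now compute coefficient N of det and derive contradiction
  set N : ℕ := (∑ i, D i) - (∑ i : Fin r, (i : ℕ)) with hN
  have hsum : ∀ σ : Equiv.Perm (Fin r), (∑ i : Fin r, (D (σ i) - (i : ℕ))) = N := by
    intro σ
    rw [Finset.sum_tsub_distrib _ (fun i _ => le_trans (le_of_lt i.isLt) (hDge (σ i))), hN,
      Equiv.sum_comp σ D]
  have hcoeff : ∀ σ : Equiv.Perm (Fin r),
      (∏ i : Fin r, hasseDeriv (i : ℕ) (g (σ i))).coeff N =
      (∏ i : Fin r, ((Nat.choose (D (σ i)) (i : ℕ) : ℕ) : ZMod q)) *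
        ∏ i : Fin r, (g i).leadingCoeff := by
    intro σ
    rw [← hsum σ, coeff_prod_of_natDegree_le' _ _ _ (fun i _ => by
      refine le_trans (natDegree_hasseDeriv_le _ _) ?_
      rw [hgdeg])]
    rw [← Equiv.prod_comp σ (fun i => (g i).leadingCoeff), ← Finset.prod_mul_distrib]
    refine Finset.prod_congr rfl fun i _ => ?_
    have hile : (i : ℕ) ≤ D (σ i) := le_trans (le_of_lt i.isLt) (hDge (σ i))
    rw [hasseDeriv_coeff, Nat.sub_add_cancel hile, ← hgdeg, coeff_natDegree, hgdeg]
  have hzero : ((Matrix.of fun i j : Fin r => hasseDeriv (j : ℕ) (g i)).det).coeff N = 0 := by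
    rw [hdet']; simp
  rw [Matrix.det_apply, finset_sum_coeff] at hzero
  simp only [Matrix.of_apply, coeff_smul] at hzero
  have : ∀ σ : Equiv.Perm (Fin r), Equiv.Perm.sign σ •
      (∏ i : Fin r, hasseDeriv (i : ℕ) (g (σ i))).coeff N =
      (Equiv.Perm.sign σ • ∏ i : Fin r, ((Nat.choose (D (σ i)) (i : ℕ) : ℕ) : ZMod q)) *
        ∏ i : Fin r, (g i).leadingCoeff := by
    intro σ
    rw [hcoeff σ, smul_mul_assoc]
  rw [Finset.sum_congr rfl (fun σ _ => this σ), ← Finset.sum_mul] at hzero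
  have hA : (Matrix.of fun a b : Fin r => ((Nat.choose (D a) (b : ℕ) : ℕ) : ZMod q)).det =
      ∑ σ : Equiv.Perm (Fin r), Equiv.Perm.sign σ •
        ∏ i : Fin r, ((Nat.choose (D (σ i)) (i : ℕ) : ℕ) : ZMod q) := by
    rw [Matrix.det_apply]
    rfl
  rw [← hA] at hzero
  have hDinj : Function.Injective fun a => ((D a : ZMod q)) := by
    intro a a' h
    apply hdist
    have := congrArg ZMod.val h
    simp only [ZMod.val_natCast] at this
    simpa [hDdef, Nat.add_mul_mod_self_left] using this
  rcases mul_eq_zero.mp hzero with h | h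
  · exact det_choose_ne_zero q r hr D hDinj h
  · exact (Finset.prod_ne_zero_iff.mpr fun i _ => leadingCoeff_ne_zero.mpr (hgne i)) h


theorem stmt_8 (q r d : ℕ) [Fact q.Prime] (hr : r < q)
    (B : Fin r → Polynomial (ZMod q)) (hB : B ≠ 0) :
    Set.ncard {m : ℕ | ∃ f : Polynomial (ZMod q), f ≠ 0 ∧ f.natDegree ≤ d ∧
        (∑ i : Fin r, B i * Polynomial.hasseDeriv (i : ℕ) f = 0) ∧
        f.natDegree % q = m} ≤ r - 1 := by
  rcases Nat.eq_zero_or_pos r with rfl | hr0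
  · exact absurd (Subsingleton.elim B 0) hB
  by_contra h
  push_neg at h
  have hle : r ≤ Set.ncard {m : ℕ | ∃ f : Polynomial (ZMod q), f ≠ 0 ∧ f.natDegree ≤ d ∧
      (∑ i : Fin r, B i * Polynomial.hasseDeriv (i : ℕ) f = 0) ∧
      f.natDegree % q = m} := by omega
  obtain ⟨t, hts, htcard⟩ := Set.exists_subset_card_eq hle
  have htfin : t.Finite := Set.finite_of_ncard_ne_zero (by omega)
  haveI := htfin.fintype
  have hcard : Fintype.card t = r := by
    rw [← Nat.card_eq_fintype_card, Nat.card_coe_set_eq, htcard]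
  let E := Fintype.equivFinOfCardEq hcard
  set e : Fin r → ℕ := fun i => ((E.symm i : ℕ)) with he
  have heinj : Function.Injective e :=
    Subtype.coe_injective.comp E.symm.injective
  have hmem : ∀ i : Fin r, ∃ g : Polynomial (ZMod q), g ≠ 0 ∧ g.natDegree ≤ d ∧
      (∑ j : Fin r, B j * Polynomial.hasseDeriv (j : ℕ) g = 0) ∧
      g.natDegree % q = e i := fun i => hts (Subtype.mem (E.symm i))
  choose F hF0 hFd hFeq hFmod using hmem
  have hdist : Function.Injective fun i => (F i).natDegree % q := by
    intro a b hab
    apply heinj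
    rw [← hFmod a, ← hFmod b]
    exact hab
  have hdet := wronskian_ne_zero q r hr F hF0 hdist
  have hmv : (Matrix.of fun i j : Fin r => hasseDeriv (j : ℕ) (F i)) *ᵥ B = 0 := by
    refine _root_.funext fun i => ?_
    rw [Matrix.mulVec, dotProduct]
    simp only [Matrix.of_apply, Pi.zero_apply]
    exact (Finset.sum_congr rfl fun j _ => mul_comm _ _).trans (hFeq i)
  exact hB (Matrix.eq_zero_of_mulVec_eq_zero hdet hmv)
end

section
/- Let P ∈ F_q[X_1,...,X_m], let x, b ∈ F_q^m, and let λ(T) = x + T·b be the line through x in direction b. Then for every j ≥ 0, the j-th Hasse derivative of the univariate polynomial Q∘λ at 0 satisfies (P∘λ)^{(j)}(0) = Σ_{j ∈ N^m, wt(j)=j} P^{(j)}(x) · b^{j}, where the sum is over multi-indices of weight j. -/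
open scoped Classical

theorem stmt_10 {F : Type*} [Field F] (m : ℕ) (P : MvPolynomial (Fin m) F)
    (x b : Fin m → F) (j : ℕ) :
    Polynomial.eval 0 (Polynomial.hasseDeriv j
        ((MvPolynomial.aeval fun k =>
          Polynomial.C (x k) + Polynomial.C (b k) * Polynomial.X) P))
      = ∑ i ∈ ((MvPolynomial.bind₁
            (fun k => MvPolynomial.C (x k) + MvPolynomial.X k) P).support.filter
              fun i => (i.sum fun _ n => n) = j),
          (MvPolynomial.bind₁
              (fun k => MvPolynomial.C (x k) + MvPolynomial.X k) P).coeff i *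
            ∏ k, b k ^ i k := by
  set Q := MvPolynomial.bind₁ (fun k => MvPolynomial.C (x k) + MvPolynomial.X k) P with hQ
  have h1 : ((MvPolynomial.aeval fun k =>
        Polynomial.C (x k) + Polynomial.C (b k) * Polynomial.X) P)
      = (MvPolynomial.aeval fun k => Polynomial.C (b k) * Polynomial.X) Q := by
    rw [hQ, MvPolynomial.aeval_bind₁]
    simp
  rw [h1, ← Polynomial.coeff_zero_eq_eval_zero, Polynomial.hasseDeriv_coeff]
  simp only [zero_add, Nat.choose_self, Nat.cast_one, one_mul]
  rw [MvPolynomial.aeval_def, MvPolynomial.eval₂_eq, Polynomial.finset_sum_coeff,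
    Finset.sum_filter]
  apply Finset.sum_congr rfl
  intro d _
  have hx : ∀ k : Fin m, (Polynomial.C (b k) * Polynomial.X) ^ (d k)
      = Polynomial.C ((b k) ^ (d k)) * Polynomial.X ^ (d k) := by
    intro k; rw [mul_pow, Polynomial.C_pow]
  simp only [hx]
  rw [Finset.prod_mul_distrib, ← map_prod, Finset.prod_pow_eq_pow_sum]
  have hsum : (d.sum fun _ n => n) = ∑ k, d k := by
    rw [Finsupp.sum_fintype]; intro; rfl
  have : (algebraMap F (Polynomial F)) (Q.coeff d) = Polynomial.C (Q.coeff d) := rfl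
  rw [this, ← mul_assoc, ← Polynomial.C_mul, Polynomial.coeff_C_mul,
    Polynomial.coeff_X_pow, hsum]
  have hS : ∑ i ∈ d.support, d i = ∑ k, d k :=
    Finset.sum_subset (Finset.subset_univ _)
      (fun k _ hk => Finsupp.notMem_support_iff.mp hk)
  have hP : ∏ k ∈ d.support, b k ^ d k = ∏ k, b k ^ d k :=
    Finset.prod_subset (Finset.subset_univ _)
      (fun k _ hk => by rw [Finsupp.notMem_support_iff.mp hk, pow_zero])
  rw [hS, hP]
  by_cases h : (∑ k, d k) = j
  · rw [if_pos h, if_pos h.symm, mul_one]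
  · rw [if_neg h, if_neg (fun hh => h hh.symm), mul_zero]
end

section
/- Let q be a prime power, s, d, n nonnegative integers with n ≤ q, and a_1,...,a_n distinct elements of F_q. The univariate multiplicity code MULT^{(1)}_{q,s}(n,d), which encodes each polynomial P ∈ F_q[X] of degree ≤ d as (P^{(<s)}(a_1), ..., P^{(<s)}(a_n)) ∈ (F_q^s)^n where P^{(<s)}(a) = (P(a), P^{(1)}(a), ..., P^{(s−1)}(a)), has relative distance at least 1 − d/(sn). -/
/-! If the first `s` Hasse derivatives of `P` and `Q` agree at a point `x`, then the Taylor
expansion of `P - Q` at `x` starts in degree `s`, i.e. `x` is a root of `P - Q` of multiplicity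
at least `s`. A nonzero polynomial of degree at most `d` has at most `d` roots counted with
multiplicity, so `P` and `Q` agree in at most `d / s` of the `n` coordinates. -/

open Polynomial Finset

theorem Multiset.sum_count_le_card {α : Type*} [DecidableEq α] (t : Finset α) (m : Multiset α) :
    ∑ x ∈ t, m.count x ≤ Multiset.card m :=
  calc ∑ x ∈ t, m.count x = ∑ x ∈ t, (m.filter (· ∈ t)).count x :=
        Finset.sum_congr rfl fun _ hx => (Multiset.count_filter_of_pos hx).symm
    _ = Multiset.card (m.filter (· ∈ t)) :=
        Multiset.sum_count_eq_card fun _ hx => (Multiset.mem_filter.mp hx).2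
    _ ≤ Multiset.card m := Multiset.card_le_card (Multiset.filter_le _ m)

namespace Polynomial

variable {R : Type*} [CommRing R]

theorem le_rootMultiplicity_of_hasseDeriv_eval_eq_zero {p : R[X]} (hp : p ≠ 0) {x : R} {s : ℕ}
    (h : ∀ k < s, (hasseDeriv k p).eval x = 0) : s ≤ p.rootMultiplicity x := by
  rw [le_rootMultiplicity_iff hp, X_sub_C_pow_dvd_iff, X_pow_dvd_iff, ← taylor_apply]
  intro k hk
  rw [taylor_coeff]
  exact h k hk

theorem sum_rootMultiplicity_le_natDegree [IsDomain R] [DecidableEq R] (p : R[X]) (S : Finset R) :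
    ∑ x ∈ S, p.rootMultiplicity x ≤ p.natDegree :=
  calc ∑ x ∈ S, p.rootMultiplicity x = ∑ x ∈ S, p.roots.count x := by
        simp only [count_roots]
    _ ≤ Multiset.card p.roots := Multiset.sum_count_le_card S p.roots
    _ ≤ p.natDegree := card_roots' p

theorem mul_card_le_natDegree_of_hasseDeriv_eval_eq_zero [IsDomain R] {p : R[X]} (hp : p ≠ 0)
    {s : ℕ} {S : Finset R} (h : ∀ x ∈ S, ∀ k < s, (hasseDeriv k p).eval x = 0) :
    s * #S ≤ p.natDegree := by
  classical
  calc s * #S = ∑ _ ∈ S, s := by rw [sum_const, smul_eq_mul, mul_comm]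
    _ ≤ ∑ x ∈ S, p.rootMultiplicity x :=
        sum_le_sum fun x hx => le_rootMultiplicity_of_hasseDeriv_eval_eq_zero hp (h x hx)
    _ ≤ p.natDegree := sum_rootMultiplicity_le_natDegree p S

theorem mul_card_hasseDeriv_agree_le {ι : Type*} [Fintype ι] [IsDomain R] [DecidableEq R]
    {a : ι → R} (ha : Function.Injective a) {d s : ℕ} {P Q : R[X]}
    (hP : P ∈ degreeLE R d) (hQ : Q ∈ degreeLE R d) (hPQ : P ≠ Q) :
    s * #{i | ∀ k < s, (hasseDeriv k P).eval (a i) = (hasseDeriv k Q).eval (a i)} ≤ d := by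
  set T : Finset ι := {i | ∀ k < s, (hasseDeriv k P).eval (a i) = (hasseDeriv k Q).eval (a i)}
  have hdeg : (P - Q).natDegree ≤ d :=
    natDegree_le_iff_degree_le.mpr <| mem_degreeLE.mp <| Submodule.sub_mem _ hP hQ
  have hvanish : ∀ x ∈ T.image a, ∀ k < s, (hasseDeriv k (P - Q)).eval x = 0 := by
    simp only [mem_image, mem_filter, mem_univ, true_and, T]
    rintro _ ⟨i, hi, rfl⟩ k hk
    rw [map_sub, eval_sub, hi k hk, sub_self]
  calc s * #T = s * #(T.image a) := by rw [card_image_of_injective T ha]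
    _ ≤ (P - Q).natDegree :=
        mul_card_le_natDegree_of_hasseDeriv_eval_eq_zero (sub_ne_zero.mpr hPQ) hvanish
    _ ≤ d := hdeg

end Polynomial

open scoped Classical

theorem stmt_18_general {F : Type*} [Field F] (s d n : ℕ)
    (hs : 0 < s)
    (a : Fin n → F) (ha : Function.Injective a) :
    ∀ P ∈ Polynomial.degreeLE F d, ∀ Q ∈ Polynomial.degreeLE F d, P ≠ Q →
      (1 - (d : ℝ) / (s * n)) * n ≤
        ((Finset.univ.filter fun i : Fin n =>
          ∃ j : Fin s, (Polynomial.hasseDeriv (j : ℕ) P).eval (a i)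
            ≠ (Polynomial.hasseDeriv (j : ℕ) Q).eval (a i)).card : ℝ) := by
  intro P hP Q hQ hPQ
  set T : Finset (Fin n) :=
    {i | ∀ k < s, (hasseDeriv k P).eval (a i) = (hasseDeriv k Q).eval (a i)}
  have hagree : s * #T ≤ d := mul_card_hasseDeriv_agree_le ha hP hQ hPQ
  have hcompl : (univ.filter fun i : Fin n => ∃ j : Fin s,
      (hasseDeriv (j : ℕ) P).eval (a i) ≠ (hasseDeriv (j : ℕ) Q).eval (a i)) = Tᶜ := by
    ext i
    simp only [T, mem_compl, mem_filter, mem_univ, true_and, not_forall, Fin.exists_iff,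
      exists_prop]
  have hT : #T ≤ n := (card_le_univ T).trans_eq (Fintype.card_fin n)
  rw [hcompl, card_compl, Fintype.card_fin, Nat.cast_sub hT]
  rcases n.eq_zero_or_pos with rfl | hn
  · simpa using hT
  have hlhs : (1 - (d : ℝ) / (s * n)) * n = n - d / s := by field_simp
  rw [hlhs, sub_le_sub_iff_left, le_div_iff₀ (by positivity)]
  exact_mod_cast (mul_comm #T s).trans_le hagree

theorem stmt_18 {F : Type*} [Field F] [Fintype F] (s d n : ℕ)
    (hs : 0 < s) (hn : 0 < n) (hnq : n ≤ Fintype.card F)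
    (a : Fin n → F) (ha : Function.Injective a) :
    ∀ P ∈ Polynomial.degreeLE F d, ∀ Q ∈ Polynomial.degreeLE F d, P ≠ Q →
      (1 - (d : ℝ) / (s * n)) * n ≤
        ((Finset.univ.filter fun i : Fin n =>
          ∃ j : Fin s, (Polynomial.hasseDeriv (j : ℕ) P).eval (a i)
            ≠ (Polynomial.hasseDeriv (j : ℕ) Q).eval (a i)).card : ℝ) :=
  stmt_18_general s d n hs a ha
end
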